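/- arXiv:2307.12710 — 5 statements merged into one kernel-verified Lean document; each statement's English description precedes it below -/
import Mathlib

section
/- Let n and u, v be integers with n = u^2 + 4v^2, n ≡ 5 (mod 8), n > 5, and v^2 = (n + 1 + 2u)^2 / 64 (i.e., 64 v^2 = (n+1+2u)^2). Then n = 13. -/
theorem stmt0 (n u v : ℤ) (h1 : n = u ^ 2 + 4 * v ^ 2) (h2 : n % 8 = 5)
    (h3 : 5 < n) (h4 : 64 * v ^ 2 = (n + 1 + 2 * u) ^ 2) : n = 13 := by
  have key : (10*u+n+1)^2 = -4*n^2+72*n-4 := by linear_combination (-80)*h1 + (-5)*h4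
  have hn : n < 18 := by nlinarith [key, sq_nonneg (10*u+n+1)]
  omega
end

section
/- Let G be a finite cyclic group (written additively), K a subgroup of Aut(G), and X a K-orbit in G that generates G. Suppose that for every x in X, the element -x lies in X + X := {a + a' : a, a' ∈ X}. Then there exists an integer b such that for every K-orbit Y in G, Y^{(b)} = Y and Y^{(-b-1)} = Y, where Y^{(m)} = {m·y : y ∈ Y}. Consequently, for every K-orbit Y, we have -y ∈ Y + Y for all y ∈ Y. -/
open Pointwise
/-- `Y` is an orbit of the subgroup `K ≤ Aut(G)` acting naturally on `G`. -/
def IsKOrbit {G : Type*} [AddCommGroup G] (K : AddSubgroup (AddAut G)) (Y : Set G) : Prop :=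
  ∃ a : G, Y = {g | ∃ f ∈ K, f a = g}

/-!
Since `G` is cyclic, every automorphism is multiplication by an integer. Writing
`-a = f a + g a` with `f, g ∈ K` gives integers `s, t` with `(s + t + 1) • a = 0`; as the orbit of
`a` generates `G`, `s + t + 1` kills `G`, so `(-s - 1) • ·` is the automorphism `g`. Both `s • ·`
and `(-s - 1) • ·` therefore lie in `K` and fix every `K`-orbit, and `-y = s • y + (-s - 1) • y`.
-/

section

variable {G : Type*} [AddCommGroup G]

theorem neg_mem_add_self_of_image_zsmul_eq {Y : Set G} {b : ℤ}
    (hb : (fun y => b • y) '' Y = Y) (hb' : (fun y => (-b - 1) • y) '' Y = Y)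
    {y : G} (hy : y ∈ Y) : -y ∈ Y + Y := by
  have hneg : -y = b • y + (-b - 1) • y := by
    rw [← add_smul, show b + (-b - 1) = -1 by ring, neg_one_smul]
  rw [hneg]
  exact Set.add_mem_add (hb ▸ Set.mem_image_of_mem _ hy) (hb' ▸ Set.mem_image_of_mem _ hy)

theorem zsmul_eq_zero_of_closure_eq_top {X : Set G} (hX : AddSubgroup.closure X = ⊤) {n : ℤ}
    (h : ∀ x ∈ X, n • x = 0) (y : G) : n • y = 0 := by
  have hle : AddSubgroup.closure X ≤ (zsmulAddGroupHom (α := G) n).ker :=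
    (AddSubgroup.closure_le _).2 h
  exact hle (hX ▸ AddSubgroup.mem_top y)

namespace IsKOrbit

variable {K : AddSubgroup (AddAut G)}

theorem self_mem (a : G) : a ∈ {g | ∃ f ∈ K, f a = g} :=
  ⟨0, zero_mem K, rfl⟩

theorem image_eq {Y : Set G} (hY : IsKOrbit K Y) {f : AddAut G} (hf : f ∈ K) : f '' Y = Y := by
  obtain ⟨a, rfl⟩ := hY
  ext z
  constructor
  · rintro ⟨_, ⟨g, hg, rfl⟩, rfl⟩
    exact ⟨f + g, add_mem hf hg, rfl⟩
  · rintro ⟨g, hg, rfl⟩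
    exact ⟨(-f + g) a, ⟨-f + g, add_mem (neg_mem hf) hg, rfl⟩, by simp [AddAut.add_apply]⟩

theorem image_zsmul_eq {Y : Set G} (hY : IsKOrbit K Y) {f : AddAut G} (hf : f ∈ K) {m : ℤ}
    (hfm : ∀ y, f y = m • y) : (fun y => m • y) '' Y = Y := by
  rw [← funext hfm]
  exact hY.image_eq hf

end IsKOrbit

end

theorem stmt4_general {G : Type*} [AddCommGroup G] (hG : IsAddCyclic G)
    (K : AddSubgroup (AddAut G)) (X : Set G) (hX : IsKOrbit K X)
    (hgen : AddSubgroup.closure X = ⊤)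
    (hXX : ∀ x ∈ X, -x ∈ X + X) :
    ∃ b : ℤ,
      (∀ Y : Set G, IsKOrbit K Y →
        (fun y => b • y) '' Y = Y ∧ (fun y => (-b - 1) • y) '' Y = Y) ∧
      ∀ Y : Set G, IsKOrbit K Y → ∀ y ∈ Y, -y ∈ Y + Y := by
  obtain ⟨a, rfl⟩ := hX
  obtain ⟨_, ⟨f, hf, rfl⟩, _, ⟨g, hg, rfl⟩, hsum⟩ := hXX a (IsKOrbit.self_mem a)
  obtain ⟨s, hs⟩ : ∃ s : ℤ, ∀ y, f y = s • y := (f : G ≃+ G).toAddMonoidHom.map_addCyclic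
  obtain ⟨t, ht⟩ : ∃ t : ℤ, ∀ y, g y = t • y := (g : G ≃+ G).toAddMonoidHom.map_addCyclic
  have hkill : ∀ y : G, (s + t + 1) • y = 0 := by
    refine zsmul_eq_zero_of_closure_eq_top hgen ?_
    rintro _ ⟨h, -, rfl⟩
    have ha : (s + t + 1) • a = 0 := by
      rw [add_smul, add_smul, one_smul, ← hs, ← ht]
      exact (eq_neg_iff_add_eq_zero).1 hsum
    rw [← map_zsmul, ha, map_zero]
  have hgt : ∀ y : G, g y = (-s - 1) • y := fun y => by
    rw [ht y, ← sub_eq_zero, ← sub_smul, show t - (-s - 1) = s + t + 1 by ring, hkill]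
  have hb : ∀ Y : Set G, IsKOrbit K Y →
      (fun y => s • y) '' Y = Y ∧ (fun y => (-s - 1) • y) '' Y = Y := fun Y hY =>
    ⟨hY.image_zsmul_eq hf hs, hY.image_zsmul_eq hg hgt⟩
  exact ⟨s, hb, fun Y hY y hy =>
    neg_mem_add_self_of_image_zsmul_eq (hb Y hY).1 (hb Y hY).2 hy⟩

theorem stmt4 {G : Type*} [AddCommGroup G] [Fintype G] (hG : IsAddCyclic G)
    (K : AddSubgroup (AddAut G)) (X : Set G) (hX : IsKOrbit K X)
    (hgen : AddSubgroup.closure X = ⊤)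
    (hXX : ∀ x ∈ X, -x ∈ X + X) :
    ∃ b : ℤ,
      (∀ Y : Set G, IsKOrbit K Y →
        (fun y => b • y) '' Y = Y ∧ (fun y => (-b - 1) • y) '' Y = Y) ∧
      ∀ Y : Set G, IsKOrbit K Y → ∀ y ∈ Y, -y ∈ Y + Y :=
  stmt4_general hG K X hX hgen hXX
end

section
/- Let Γ be a weakly distance-regular digraph with q ≥ 3 such that (1, q-1) ∈ ∂̃(Γ) and p_{(1,q-1),(1,q-1)}^{(2,q-2)} > 0. Then every arc of type (1,q-1) is contained in a circuit of length q all of whose arcs are of type (1,q-1). -/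
/-- There is a directed walk of length `n` from `x` to `y` in the digraph
with arc relation `A`. -/
def HasWalk {V : Type*} (A : V → V → Prop) : ℕ → V → V → Prop
  | 0 => fun x y => x = y
  | n + 1 => fun x y => ∃ z, A x z ∧ HasWalk A n z y

/-- The one-way distance `∂(x,y)` in the digraph with arc relation `A`. -/
noncomputable def ddist {V : Type*} (A : V → V → Prop) (x y : V) : ℕ :=
  sInf {n | HasWalk A n x y}

/-- The two-way distance `∂̃(x,y) = (∂(x,y), ∂(y,x))`. -/
noncomputable def tdist {V : Type*} (A : V → V → Prop) (x y : V) : ℕ × ℕ :=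
  (ddist A x y, ddist A y x)

/-- A digraph is weakly distance-regular if it is strongly connected and the
two-way distance relations form an association scheme, i.e. the intersection
numbers `|{z : ∂̃(x,z) = ĩ, ∂̃(z,y) = j̃}|` depend only on `∂̃(x,y)`. -/
def IsWDRD {V : Type*} (A : V → V → Prop) : Prop :=
  (∀ x y : V, ∃ n, HasWalk A n x y) ∧
  ∀ (i j : ℕ × ℕ) (x y x' y' : V), tdist A x y = tdist A x' y' →
    {z | tdist A x z = i ∧ tdist A z y = j}.ncard =
    {z | tdist A x' z = i ∧ tdist A z y' = j}.ncard

section Aux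

variable {V : Type*} {A : V → V → Prop}

lemma hasWalk_trans : ∀ {m n : ℕ} {x y z : V}, HasWalk A m x y → HasWalk A n y z →
    HasWalk A (m + n) x z := by
  intro m
  induction m with
  | zero => intro n x y z h h'; exact (show x = y from h) ▸ (by simpa using h')
  | succ m ih =>
    intro n x y z h h'
    obtain ⟨w, haw, hw⟩ := h
    have : m + 1 + n = (m + n) + 1 := by omega
    rw [this]
    exact ⟨w, haw, ih hw h'⟩

lemma ddist_le {n : ℕ} {x y : V} (h : HasWalk A n x y) : ddist A x y ≤ n :=
  Nat.sInf_le h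

lemma hasWalk_ddist (hconn : ∀ x y : V, ∃ n, HasWalk A n x y) (x y : V) :
    HasWalk A (ddist A x y) x y :=
  Nat.sInf_mem (hconn x y)

lemma ddist_triangle (hconn : ∀ x y : V, ∃ n, HasWalk A n x y) (x y z : V) :
    ddist A x z ≤ ddist A x y + ddist A y z :=
  ddist_le (hasWalk_trans (hasWalk_ddist hconn x y) (hasWalk_ddist hconn y z))

lemma ddist_self (x : V) : ddist A x x = 0 :=
  Nat.le_zero.mp (Nat.sInf_le (show HasWalk A 0 x x from rfl))

lemma tdist_eq_iff {x y : V} {a b : ℕ} :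
    tdist A x y = (a, b) ↔ ddist A x y = a ∧ ddist A y x = b := by
  rw [tdist, Prod.mk.injEq]

lemma arc_of_ddist_eq_one (hconn : ∀ x y : V, ∃ n, HasWalk A n x y) {x y : V}
    (h : ddist A x y = 1) : A x y := by
  have hw := hasWalk_ddist hconn x y
  rw [h] at hw
  obtain ⟨z, haz, hz⟩ := hw
  exact (show z = y from hz) ▸ haz

lemma hasWalk_exists_fun : ∀ (n : ℕ) (x y : V), HasWalk A n x y →
    ∃ c : ℕ → V, c 0 = x ∧ c n = y ∧ ∀ j < n, A (c j) (c (j + 1)) := by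
  intro n
  induction n with
  | zero =>
    intro x y h
    exact ⟨fun _ => x, rfl, (show x = y from h) ▸ rfl, fun j hj => absurd hj (by omega)⟩
  | succ n ih =>
    intro x y h
    obtain ⟨z, haz, hw⟩ := h
    obtain ⟨c, hc0, hcn, harc⟩ := ih z y hw
    refine ⟨fun j => if j = 0 then x else c (j - 1), by simp, by simp [hcn], ?_⟩
    intro j hj
    match j with
    | 0 => simpa [hc0] using haz
    | m + 1 => simpa using harc m (by omega)

lemma hasWalk_of_arcs {c : ℕ → V} : ∀ (k a : ℕ),
    (∀ j < k, A (c (a + j)) (c (a + j + 1))) → HasWalk A k (c a) (c (a + k)) := by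
  intro k
  induction k with
  | zero => intro a _; exact rfl
  | succ k ih =>
    intro a h
    refine ⟨c (a + 1), h 0 (by omega), ?_⟩
    have h' : ∀ j < k, A (c (a + 1 + j)) (c (a + 1 + j + 1)) := by
      intro j hj
      have := h (j + 1) (by omega)
      have e1 : a + (j + 1) = a + 1 + j := by omega
      rw [e1] at this
      exact this
    have := ih (a + 1) h'
    have e : a + 1 + k = a + (k + 1) := by omega
    rw [e] at this
    exact this

lemma hasWalk_seg {c : ℕ → V} {q : ℕ} (harc : ∀ j < q, A (c j) (c (j + 1)))
    {a b : ℕ} (hab : a ≤ b) (hbq : b ≤ q) : HasWalk A (b - a) (c a) (c b) := by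
  have := hasWalk_of_arcs (A := A) (c := c) (b - a) a (fun j hj => harc (a + j) (by omega))
  have e : a + (b - a) = b := by omega
  rwa [e] at this

/-- Circuit of length `q` through `(u,v)` whose first `i` arcs have type `(1, q-1)`. -/
def GoodCircuit (A : V → V → Prop) (q : ℕ) (u v : V) (i : ℕ) : Prop :=
  ∃ c : ℕ → V, c 0 = u ∧ c 1 = v ∧ c q = u ∧ (∀ j < q, A (c j) (c (j + 1))) ∧
    ∀ j < i, tdist A (c j) (c (j + 1)) = (1, q - 1)

end Aux

theorem stmt15 {V : Type*} [Fintype V] (A : V → V → Prop) (q : ℕ) (hq : 3 ≤ q)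
    (hwdr : IsWDRD A) (htype : ∃ x y : V, tdist A x y = (1, q - 1))
    (hp : ∃ x y : V, tdist A x y = (2, q - 2) ∧
      ∃ z, tdist A x z = (1, q - 1) ∧ tdist A z y = (1, q - 1)) :
    ∀ u v : V, tdist A u v = (1, q - 1) →
      ∃ f : ZMod q → V, Function.Injective f ∧ f 0 = u ∧ f 1 = v ∧
        ∀ i : ZMod q, tdist A (f i) (f (i + 1)) = (1, q - 1) := by
  obtain ⟨hconn, hreg⟩ := hwdr
  obtain ⟨x₀, y₀, hxy₀, z₀, hxz₀, hzy₀⟩ := hp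
  -- p^{(2,q-2)}_{(1,q-1),(1,q-1)} > 0
  have lemA : ∀ a c : V, tdist A a c = (2, q - 2) →
      ∃ b, tdist A a b = (1, q - 1) ∧ tdist A b c = (1, q - 1) := by
    intro a c hac
    have key := hreg (1, q - 1) (1, q - 1) x₀ y₀ a c (hxy₀.trans hac.symm)
    have h1 : 0 < {z | tdist A x₀ z = (1, q - 1) ∧ tdist A z y₀ = (1, q - 1)}.ncard :=
      (Set.ncard_pos (Set.toFinite _)).mpr ⟨z₀, hxz₀, hzy₀⟩
    rw [key] at h1
    exact (Set.ncard_pos (Set.toFinite _)).mp h1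
  -- p^{(1,q-1)}_{(2,q-2),(q-1,1)} > 0
  have lemB : ∀ a c : V, tdist A a c = (1, q - 1) →
      ∃ b, tdist A a b = (2, q - 2) ∧ tdist A b c = (q - 1, 1) := by
    intro a c hac
    have hy₀z₀ : tdist A y₀ z₀ = (q - 1, 1) := by
      obtain ⟨h1, h2⟩ := tdist_eq_iff.mp hzy₀
      exact tdist_eq_iff.mpr ⟨h2, h1⟩
    have key := hreg (2, q - 2) (q - 1, 1) x₀ z₀ a c (hxz₀.trans hac.symm)
    have h1 : 0 < {z | tdist A x₀ z = (2, q - 2) ∧ tdist A z z₀ = (q - 1, 1)}.ncard :=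
      (Set.ncard_pos (Set.toFinite _)).mpr ⟨y₀, hxy₀, hy₀z₀⟩
    rw [key] at h1
    exact (Set.ncard_pos (Set.toFinite _)).mp h1
  intro u v huv
  obtain ⟨hd_uv, hd_vu⟩ := tdist_eq_iff.mp huv
  -- base: a circuit with the first two arcs of type (1, q-1)
  have base2 : GoodCircuit A q u v 2 := by
    obtain ⟨w, hw1, hw2⟩ := lemB u v huv
    obtain ⟨hd_uw, hd_wu⟩ := tdist_eq_iff.mp hw1
    obtain ⟨hd_wv, hd_vw⟩ := tdist_eq_iff.mp hw2
    have hvw_t : tdist A v w = (1, q - 1) := tdist_eq_iff.mpr ⟨hd_vw, hd_wv⟩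
    have hwalk : HasWalk A (q - 2) w u := by
      have := hasWalk_ddist hconn w u; rwa [hd_wu] at this
    obtain ⟨d, hd0, hdn, hdarc⟩ := hasWalk_exists_fun (q - 2) w u hwalk
    refine ⟨fun j => if j = 0 then u else if j = 1 then v else d (j - 2), by simp, by simp,
      ?_, ?_, ?_⟩
    · have h0 : ¬ (q = 0) := by omega
      have h1 : ¬ (q = 1) := by omega
      simp only [h0, h1, if_false]
      rw [show q - 2 = q - 2 from rfl] at hdn
      exact hdn
    · intro j hj
      match j with
      | 0 => simpa using arc_of_ddist_eq_one hconn hd_uv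
      | 1 =>
        simp only [show (1:ℕ) ≠ 0 by omega, show (2:ℕ) ≠ 0 by omega, show (2:ℕ) ≠ 1 by omega,
          if_false, if_true, reduceIte]
        rw [show (2:ℕ) - 2 = 0 from rfl, hd0]
        exact arc_of_ddist_eq_one hconn hd_vw
      | m + 2 =>
        have e1 : ¬ (m + 2 = 0) := by omega
        have e2 : ¬ (m + 2 = 1) := by omega
        have e3 : ¬ (m + 3 = 0) := by omega
        have e4 : ¬ (m + 3 = 1) := by omega
        simp only [e1, e2, e3, e4, if_false]
        have := hdarc m (by omega)
        simpa using this
    · intro j hj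
      match j with
      | 0 => simpa using huv
      | 1 =>
        simp only [show (1:ℕ) ≠ 0 by omega, show (2:ℕ) ≠ 0 by omega, show (2:ℕ) ≠ 1 by omega,
          if_false, if_true, reduceIte]
        rw [show (2:ℕ) - 2 = 0 from rfl, hd0]
        exact hvw_t
  -- inductive replacement step
  have step : ∀ i, 2 ≤ i → i < q → GoodCircuit A q u v i → GoodCircuit A q u v (i + 1) := by
    intro i hi2 hiq ⟨c, hc0, hc1, hcq, harc, hgood⟩
    have hA1 : tdist A (c (i - 1)) (c i) = (1, q - 1) := by
      have := hgood (i - 1) (by omega)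
      rwa [show i - 1 + 1 = i by omega] at this
    obtain ⟨h1a, h1b⟩ := tdist_eq_iff.mp hA1
    have hf : ddist A (c (i - 1)) (c (i + 1)) ≤ 2 := by
      have := hasWalk_seg harc (show i - 1 ≤ i + 1 by omega) (by omega)
      rw [show i + 1 - (i - 1) = 2 by omega] at this
      exact ddist_le this
    have hb1 : ddist A (c (i + 1)) (c (i - 1)) ≤ q - 2 := by
      have w1 := hasWalk_seg harc (show i + 1 ≤ q by omega) le_rfl
      have w2 := hasWalk_seg harc (show 0 ≤ i - 1 by omega) (show i - 1 ≤ q by omega)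
      rw [show i - 1 - 0 = i - 1 by omega] at w2
      rw [hc0] at w2
      rw [hcq] at w1
      have := hasWalk_trans w1 w2
      rw [show q - (i + 1) + (i - 1) = q - 2 by omega] at this
      exact ddist_le this
    have hb2 : q - 2 ≤ ddist A (c (i + 1)) (c (i - 1)) := by
      have tri := ddist_triangle hconn (c i) (c (i + 1)) (c (i - 1))
      have hstep1 : ddist A (c i) (c (i + 1)) ≤ 1 := by
        have := hasWalk_seg harc (show i ≤ i + 1 by omega) (by omega)
        rw [show i + 1 - i = 1 by omega] at this
        exact ddist_le this
      omega
    have hf2 : 2 ≤ ddist A (c (i - 1)) (c (i + 1)) := by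
      by_contra hcon
      push_neg at hcon
      have w1 := hasWalk_seg harc (show 1 ≤ i - 1 by omega) (show i - 1 ≤ q by omega)
      have w2 := hasWalk_ddist hconn (c (i - 1)) (c (i + 1))
      have w3 := hasWalk_seg harc (show i + 1 ≤ q by omega) le_rfl
      have wall := hasWalk_trans (hasWalk_trans w1 w2) w3
      have hle := ddist_le wall
      rw [hc1, hcq] at hle
      omega
    have ht : tdist A (c (i - 1)) (c (i + 1)) = (2, q - 2) :=
      tdist_eq_iff.mpr ⟨by omega, by omega⟩
    obtain ⟨y, hy1, hy2⟩ := lemA _ _ ht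
    refine ⟨fun j => if j = i then y else c j, ?_, ?_, ?_, ?_, ?_⟩
    · simp only [show (0:ℕ) ≠ i by omega, if_false]; exact hc0
    · simp only [show (1:ℕ) ≠ i by omega, if_false]; exact hc1
    · simp only [show q ≠ i by omega, if_false]; exact hcq
    · intro j hj
      rcases eq_or_ne j i with rfl | hji
      · simp only [if_pos rfl, show j + 1 ≠ j by omega, if_false]
        exact arc_of_ddist_eq_one hconn (tdist_eq_iff.mp hy2).1
      · rcases eq_or_ne (j + 1) i with hj1 | hj1
        · simp only [hji, hj1, if_false, if_pos rfl, if_neg hji]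
          have : j = i - 1 := by omega
          rw [this]
          exact arc_of_ddist_eq_one hconn (tdist_eq_iff.mp hy1).1
        · simp only [if_neg hji, if_neg hj1]
          exact harc j hj
    · intro j hj
      rcases eq_or_ne j i with rfl | hji
      · simp only [if_pos rfl, show j + 1 ≠ j by omega, if_false]
        exact hy2
      · rcases eq_or_ne (j + 1) i with hj1 | hj1
        · simp only [hji, hj1, if_false, if_pos rfl, if_neg hji]
          have : j = i - 1 := by omega
          rw [this]
          exact hy1
        · simp only [if_neg hji, if_neg hj1]
          exact hgood j (by omega)
  -- iterate to get all q arcs of type (1, q-1)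
  have main : ∀ i, 2 ≤ i → i ≤ q → GoodCircuit A q u v i := by
    intro i hi2
    induction i, hi2 using Nat.le_induction with
    | base => intro _; exact base2
    | succ i hi ih => intro hiq; exact step i hi (by omega) (ih (by omega))
  obtain ⟨c, hc0, hc1, hcq, harc, hgood⟩ := main q (by omega) le_rfl
  -- distinctness of circuit vertices
  have hdistinct : ∀ a b, a < b → b < q → c a ≠ c b := by
    intro a b hab hbq hne
    have hg := hgood a (by omega)
    have h2 : ddist A (c (a + 1)) (c a) = q - 1 := (tdist_eq_iff.mp hg).2
    have w1 := hasWalk_seg harc (show a + 1 ≤ b by omega) (by omega)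
    have tri := ddist_le (hasWalk_trans w1 (hasWalk_ddist hconn (c b) (c a)))
    have h0 : ddist A (c b) (c a) = 0 := by rw [← hne]; exact ddist_self _
    omega
  haveI : NeZero q := ⟨by omega⟩
  haveI : Fact (1 < q) := ⟨by omega⟩
  refine ⟨fun i => c i.val, ?_, ?_, ?_, ?_⟩
  · intro i j hij
    by_contra hne
    have hvne : i.val ≠ j.val := fun h => hne (ZMod.val_injective _ h)
    rcases lt_or_gt_of_ne hvne with hlt | hgt
    · exact hdistinct i.val j.val hlt (ZMod.val_lt j) hij
    · exact hdistinct j.val i.val hgt (ZMod.val_lt i) hij.symm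
  · simpa [ZMod.val_zero] using hc0
  · simpa [ZMod.val_one] using hc1
  · intro i
    show tdist A (c i.val) (c (i + 1).val) = (1, q - 1)
    have hv : (i + 1).val = (i.val + 1) % q := by
      rw [ZMod.val_add, ZMod.val_one]
    rcases lt_or_eq_of_le (Nat.succ_le_of_lt (ZMod.val_lt i)) with hlt | heq
    · rw [hv, Nat.mod_eq_of_lt hlt]
      exact hgood i.val (ZMod.val_lt i)
    · have heq' : i.val + 1 = q := heq
      rw [hv, heq', Nat.mod_self]
      have := hgood i.val (ZMod.val_lt i)
      rwa [heq', hcq, ← hc0] at this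
end

section
/- The lexicographic product digraph (C_3 × K_h)[K̄_l], where h > 3, 3 ∤ h, l > 1, C_3 is the directed 3-cycle, K_h the complete graph on h vertices, and K̄_l the edgeless graph on l vertices, is not weakly distance-regular. Specifically, in Γ = (C_3 × K_h)[K̄_l], the vertices u = (0,1,0) and v = (0,0,1) both satisfy ∂̃((0,0,0), u) = ∂̃((0,0,0), v) = (3,3), but |P_{(1,2),(2,1)}((0,0,0), u)| = (h-2)·l ≠ (h-1)·l = |P_{(1,2),(2,1)}((0,0,0), v)|. -/
/-- The arc relation of the lexicographic product `(C_3 × K_h)[K̄_l]` on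
`ZMod 3 × ZMod h × ZMod l`. -/
def A16 (h l : ℕ) : (ZMod 3 × ZMod h × ZMod l) → (ZMod 3 × ZMod h × ZMod l) → Prop :=
  fun u v => v.1 = u.1 + 1 ∧ v.2.1 ≠ u.2.1

section Aux

variable {h l : ℕ}

lemma hasWalk_one_iff {V : Type*} (A : V → V → Prop) (x y : V) :
    HasWalk A 1 x y ↔ A x y := by
  constructor
  · rintro ⟨z, hz, rfl⟩; exact hz
  · intro hxy; exact ⟨y, hxy, rfl⟩

lemma ddist_eq_of {V : Type*} {A : V → V → Prop} {x y : V} {n : ℕ}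
    (hn : HasWalk A n x y) (hm : ∀ m < n, ¬ HasWalk A m x y) :
    ddist A x y = n := by
  have h1 : sInf {k | HasWalk A k x y} ∈ {k | HasWalk A k x y} :=
    Nat.sInf_mem ⟨n, hn⟩
  have h2 : sInf {k | HasWalk A k x y} ≤ n := Nat.sInf_le hn
  rcases lt_or_eq_of_le h2 with hlt | heq
  · exact absurd h1 (hm _ hlt)
  · exact heq

lemma hasWalk_of_ddist {V : Type*} {A : V → V → Prop} {x y : V} {n : ℕ} (hn : n ≠ 0)
    (hd : ddist A x y = n) : HasWalk A n x y := by
  unfold ddist at hd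
  rcases Set.eq_empty_or_nonempty {k | HasWalk A k x y} with he | hne
  · rw [he, Nat.sInf_empty] at hd; omega
  · have := Nat.sInf_mem hne
    rwa [hd] at this

lemma walk_fst {n : ℕ} {x y : ZMod 3 × ZMod h × ZMod l}
    (hw : HasWalk (A16 h l) n x y) : y.1 = x.1 + (n : ZMod 3) := by
  induction n generalizing x with
  | zero => cases hw; simp
  | succ n ih =>
    obtain ⟨z, hz, hw⟩ := hw
    have := ih hw
    rw [this, hz.1]
    push_cast
    ring

lemma exists_ne_ne (hh : 3 < h) (a b : ZMod h) : ∃ c : ZMod h, c ≠ a ∧ c ≠ b := by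
  haveI : NeZero h := ⟨by omega⟩
  by_contra hc
  push_neg at hc
  have hsub : (Finset.univ : Finset (ZMod h)) ⊆ {a, b} := by
    intro c _
    by_cases hca : c = a
    · simp [hca]
    · simp [hc c hca]
  have hle := Finset.card_le_card hsub
  have h2 : ({a, b} : Finset (ZMod h)).card ≤ 2 :=
    le_trans (Finset.card_insert_le _ _) (by simp)
  rw [Finset.card_univ, ZMod.card] at hle
  omega

/-- Key characterization: for `v` with first coordinate `0`,
`∂(v,z) = 1 ∧ ∂(z,v) = 2` iff `z.1 = 1` and `z.2.1 ≠ v.2.1`. -/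
lemma key (hh : 3 < h) (v z : ZMod 3 × ZMod h × ZMod l) (hv : v.1 = 0) :
    (ddist (A16 h l) v z = 1 ∧ ddist (A16 h l) z v = 2) ↔
    (z.1 = 1 ∧ z.2.1 ≠ v.2.1) := by
  constructor
  · rintro ⟨h1, _⟩
    have hw := hasWalk_of_ddist one_ne_zero h1
    rw [hasWalk_one_iff] at hw
    obtain ⟨ha, hb⟩ := hw
    exact ⟨by rw [ha, hv, zero_add], hb⟩
  · rintro ⟨hz1, hz2⟩
    constructor
    · refine ddist_eq_of ?_ ?_
      · rw [hasWalk_one_iff]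
        exact ⟨by rw [hv, zero_add, hz1], hz2⟩
      · intro m hm
        interval_cases m
        intro hw; cases hw
        rw [hv] at hz1; exact absurd hz1 (by decide)
    · obtain ⟨c, hc1, hc2⟩ := exists_ne_ne hh z.2.1 v.2.1
      refine ddist_eq_of ?_ ?_
      · refine ⟨(2, c, 0), ⟨?_, hc1⟩, v, ⟨?_, hc2.symm⟩, rfl⟩
        · show (2 : ZMod 3) = z.1 + 1
          rw [hz1]; decide
        · show v.1 = (2 : ZMod 3) + 1
          rw [hv]; decide
      · intro m hm
        interval_cases m
        · intro hw; cases hw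
          rw [hv] at hz1; exact absurd hz1 (by decide)
        · rw [hasWalk_one_iff]
          rintro ⟨ha, -⟩
          rw [hv, hz1] at ha
          exact absurd ha (by decide)

lemma ddist_three (hh : 3 < h) (x y : ZMod 3 × ZMod h × ZMod l)
    (hx : x.1 = 0) (hy : y.1 = 0) (hxy : x ≠ y) :
    ddist (A16 h l) x y = 3 := by
  obtain ⟨c, hc1, -⟩ := exists_ne_ne hh x.2.1 x.2.1
  obtain ⟨d, hd1, hd2⟩ := exists_ne_ne hh c y.2.1
  refine ddist_eq_of ?_ ?_
  · refine ⟨(1, c, 0), ⟨?_, hc1⟩, (2, d, 0), ⟨?_, hd1⟩, y, ⟨?_, hd2.symm⟩, rfl⟩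
    · show (1 : ZMod 3) = x.1 + 1
      rw [hx]; decide
    · show (2 : ZMod 3) = (1 : ZMod 3) + 1
      decide
    · show y.1 = (2 : ZMod 3) + 1
      rw [hy]; decide
  · intro m hm
    interval_cases m
    · intro hw; exact hxy hw
    · intro hw
      have := walk_fst hw
      rw [hx, hy] at this
      exact absurd this (by decide)
    · intro hw
      have := walk_fst hw
      rw [hx, hy] at this
      exact absurd this (by decide)

lemma tdist_33 (hh : 3 < h) (x y : ZMod 3 × ZMod h × ZMod l)
    (hx : x.1 = 0) (hy : y.1 = 0) (hxy : x ≠ y) :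
    tdist (A16 h l) x y = (3, 3) := by
  unfold tdist
  rw [ddist_three hh x y hx hy hxy, ddist_three hh y x hy hx (Ne.symm hxy)]

/-- The counting set as an explicit finset. -/
lemma pset_eq (hh : 3 < h) (hl : 1 < l) (b : ZMod h) (e : ZMod l) :
    {z : ZMod 3 × ZMod h × ZMod l | tdist (A16 h l) (0, 0, 0) z = (1, 2) ∧
        tdist (A16 h l) z (0, b, e) = (2, 1)} =
    haveI : NeZero h := ⟨by omega⟩
    haveI : NeZero l := ⟨by omega⟩
    ↑(({1} : Finset (ZMod 3)) ×ˢ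
      ((Finset.univ.filter fun a : ZMod h => a ≠ 0 ∧ a ≠ b) ×ˢ
        (Finset.univ : Finset (ZMod l)))) := by
  haveI : NeZero h := ⟨by omega⟩
  haveI : NeZero l := ⟨by omega⟩
  ext z
  have h1 : tdist (A16 h l) (0, 0, 0) z = (1, 2) ↔ (z.1 = 1 ∧ z.2.1 ≠ 0) := by
    rw [show ((1 : ℕ), (2 : ℕ)) = ((1 : ℕ), (2 : ℕ)) from rfl, tdist, Prod.mk.injEq]
    exact key hh (0, 0, 0) z rfl
  have h2 : tdist (A16 h l) z (0, b, e) = (2, 1) ↔ (z.1 = 1 ∧ z.2.1 ≠ b) := by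
    rw [tdist, Prod.mk.injEq, and_comm]
    exact key hh (0, b, e) z rfl
  simp only [Set.mem_setOf_eq, h1, h2, Finset.coe_product, Set.mem_prod,
    Finset.coe_singleton, Set.mem_singleton_iff, Finset.coe_filter,
    Set.mem_setOf_eq, Finset.mem_univ, true_and, Finset.coe_univ,
    Set.mem_univ, and_true]
  tauto

lemma pset_card (hh : 3 < h) (hl : 1 < l) (b : ZMod h) (e : ZMod l) (k : ℕ)
    (hk : haveI : NeZero h := ⟨by omega⟩
      (Finset.univ.filter fun a : ZMod h => a ≠ 0 ∧ a ≠ b).card = k) :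
    {z : ZMod 3 × ZMod h × ZMod l | tdist (A16 h l) (0, 0, 0) z = (1, 2) ∧
        tdist (A16 h l) z (0, b, e) = (2, 1)}.ncard = k * l := by
  haveI : NeZero h := ⟨by omega⟩
  haveI : NeZero l := ⟨by omega⟩
  rw [pset_eq hh hl b e, Set.ncard_coe_finset, Finset.card_product,
    Finset.card_product, Finset.card_singleton, Finset.card_univ, ZMod.card, hk]
  ring

end Aux

theorem stmt16 (h l : ℕ) (hh : 3 < h) (h3 : ¬ 3 ∣ h) (hl : 1 < l) :
    ¬ IsWDRD (A16 h l) ∧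
    tdist (A16 h l) (0, 0, 0) (0, 1, 0) = (3, 3) ∧
    tdist (A16 h l) (0, 0, 0) (0, 0, 1) = (3, 3) ∧
    {z | tdist (A16 h l) (0, 0, 0) z = (1, 2) ∧
        tdist (A16 h l) z (0, 1, 0) = (2, 1)}.ncard = (h - 2) * l ∧
    {z | tdist (A16 h l) (0, 0, 0) z = (1, 2) ∧
        tdist (A16 h l) z (0, 0, 1) = (2, 1)}.ncard = (h - 1) * l := by
  haveI : NeZero h := ⟨by omega⟩
  haveI : NeZero l := ⟨by omega⟩
  haveI : Fact (1 < h) := ⟨by omega⟩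
  have h01 : (0 : ZMod h) ≠ 1 := zero_ne_one
  have hcard1 : (Finset.univ.filter fun a : ZMod h => a ≠ 0 ∧ a ≠ (0 : ZMod h)).card
      = h - 1 := by
    have : (Finset.univ.filter fun a : ZMod h => a ≠ 0 ∧ a ≠ (0 : ZMod h)) =
        Finset.univ \ {0} := by
      ext a; simp [and_self]
    rw [this, Finset.card_sdiff_of_subset (by simp), Finset.card_univ, ZMod.card,
      Finset.card_singleton]
  have hcard2 : (Finset.univ.filter fun a : ZMod h => a ≠ 0 ∧ a ≠ (1 : ZMod h)).card
      = h - 2 := by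
    have : (Finset.univ.filter fun a : ZMod h => a ≠ 0 ∧ a ≠ (1 : ZMod h)) =
        Finset.univ \ {0, 1} := by
      ext a; simp
    rw [this, Finset.card_sdiff_of_subset (by simp), Finset.card_univ, ZMod.card]
    rw [Finset.card_insert_of_notMem (by simp [h01]), Finset.card_singleton]
  have hs1 : {z | tdist (A16 h l) (0, 0, 0) z = (1, 2) ∧
      tdist (A16 h l) z (0, 1, 0) = (2, 1)}.ncard = (h - 2) * l :=
    pset_card hh hl 1 0 (h - 2) hcard2
  have hs2 : {z | tdist (A16 h l) (0, 0, 0) z = (1, 2) ∧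
      tdist (A16 h l) z (0, 0, 1) = (2, 1)}.ncard = (h - 1) * l :=
    pset_card hh hl 0 1 (h - 1) hcard1
  have ht1 : tdist (A16 h l) (0, 0, 0) (0, 1, 0) = (3, 3) :=
    tdist_33 hh _ _ rfl rfl (by simp [Prod.ext_iff, h01.symm])
  have ht2 : tdist (A16 h l) (0, 0, 0) (0, 0, 1) = (3, 3) :=
    tdist_33 hh _ _ rfl rfl (by
      haveI : Fact (1 < l) := ⟨hl⟩
      simp [Prod.ext_iff])
  refine ⟨?_, ht1, ht2, hs1, hs2⟩
  rintro ⟨-, hP⟩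
  have := hP (1, 2) (2, 1) (0, 0, 0) (0, 1, 0) (0, 0, 0) (0, 0, 1) (by rw [ht1, ht2])
  rw [hs1, hs2] at this
  have hlpos : 0 < l := by omega
  have := Nat.eq_of_mul_eq_mul_right hlpos this
  omega
end

section
/- Let G be a finite cyclic group of order n (written additively), L ≤ G a subgroup, and suppose G/L decomposes as an internal direct product U_0/L × U_1/L × ... × U_k/L with pairwise coprime orders |U_i/L|. Let X ⊆ G be a union of L-cosets whose image in G/L equals X_0 × (U_1/L \ {L}) × ... × (U_k/L \ {L}) for some X_0 ⊆ U_0/L. Then the Cayley digraph Cay(G, X) is isomorphic to the lexicographic product (Cay(U_0/L, X_0) × K_{|U_1/L|} × ... × K_{|U_k/L|})[K̄_{|L|}], where × denotes direct product of digraphs, K_m the complete graph on m vertices, and K̄_m the edgeless graph on m vertices. -/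
theorem stmt19 {G : Type*} [AddCommGroup G] [Fintype G] (hG : IsAddCyclic G)
    (L : AddSubgroup G) (k : ℕ) (Q : Fin (k + 1) → Type*)
    [∀ i, AddCommGroup (Q i)] [∀ i, Fintype (Q i)]
    (hcop : ∀ i j, i ≠ j → Nat.Coprime (Fintype.card (Q i)) (Fintype.card (Q j)))
    (φ : (G ⧸ L) ≃+ (∀ i, Q i))
    (X : Set G)
    -- `X` is a union of `L`-cosets
    (hXL : ∀ x ∈ X, ∀ l ∈ L, x + l ∈ X)
    (X0 : Set (Q 0))
    -- the image of `X` in `G/L ≅ Q 0 × Q 1 × ⋯ × Q k` is `X0 × (Q 1 \ {0}) × ⋯ × (Q k \ {0})`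
    (hX : φ '' (QuotientAddGroup.mk '' X) =
      {f : ∀ i, Q i | f 0 ∈ X0 ∧ ∀ i, i ≠ 0 → f i ≠ 0}) :
    -- then `Cay(G, X)` is isomorphic, as a digraph, to the lexicographic product
    -- `(Cay(Q 0, X0) × K_{|Q 1|} × ⋯ × K_{|Q k|})[K̄_{|L|}]`
    ∃ e : G ≃ ((∀ i, Q i) × L),
      ∀ x y : G, (y - x ∈ X) ↔
        ((e y).1 0 - (e x).1 0 ∈ X0 ∧ ∀ i, i ≠ 0 → (e y).1 i ≠ (e x).1 i) := by
  classical
  let e0 : G ≃ (G ⧸ L) × L := AddSubgroup.addGroupEquivQuotientProdAddSubgroup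
  have he0 : ∀ g : G, (e0 g).1 = QuotientAddGroup.mk g := fun g => rfl
  refine ⟨e0.trans (Equiv.prodCongr φ.toEquiv (Equiv.refl L)), fun x y => ?_⟩
  have hfst : ∀ g : G,
      ((e0.trans (Equiv.prodCongr φ.toEquiv (Equiv.refl L))) g).1 =
        φ (QuotientAddGroup.mk g) := fun g => by
    simp [Equiv.prodCongr, he0 g]
  rw [hfst x, hfst y]
  have key : y - x ∈ X ↔ φ (QuotientAddGroup.mk (y - x)) ∈
      {f : ∀ i, Q i | f 0 ∈ X0 ∧ ∀ i, i ≠ 0 → f i ≠ 0} := by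
    rw [← hX]
    constructor
    · intro h
      exact ⟨_, ⟨_, h, rfl⟩, rfl⟩
    · rintro ⟨q, ⟨z, hz, rfl⟩, hq⟩
      have : QuotientAddGroup.mk (y - x) = (QuotientAddGroup.mk z : G ⧸ L) :=
        φ.injective hq.symm
      rw [QuotientAddGroup.eq] at this
      have hmem : -z + (y - x) ∈ L := by
        have h' := L.neg_mem this
        rw [show -(-(y - x) + z) = -z + (y - x) by abel] at h'
        exact h'
      have := hXL z hz _ hmem
      simpa using this
  rw [key]
  have hφ : φ (QuotientAddGroup.mk (y - x)) =
      φ (QuotientAddGroup.mk y) - φ (QuotientAddGroup.mk x) := by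
    rw [← map_sub]; rfl
  rw [hφ]
  simp only [Set.mem_setOf_eq, Pi.sub_apply]
  constructor
  · rintro ⟨h1, h2⟩
    exact ⟨h1, fun i hi => fun h => h2 i hi (by simp [h])⟩
  · rintro ⟨h1, h2⟩
    exact ⟨h1, fun i hi h => h2 i hi (by rwa [sub_eq_zero] at h)⟩
end
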